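/- Let λ be a nonzero integer partition, n = h_λ(1,1) + 1, and (B,E) the unique elementary interval bipartition with λ(B,E) = λ. Then there exists a Coxeter element c of S_n such that: (a) for every i ∈ {1,…,n−1}, the adjacent transposition s_i = (i,i+1) is final in c if and only if i ∈ B and i+1 ∈ E; and (b) for every i ∈ {2,…,n−2}, s_i is initial in c if and only if i ∈ E and i+1 ∈ B. Moreover, for any such c, RSK_{λ,c} = RSK_λ. -/

import Mathlib

/-!
The Coxeter elements of `S_n` are exactly the `n`-cycles `(b₁ ⋯ b_p e_q ⋯ e₁)` attached to the
elementary bipartitions `B = {b₁ < ⋯ < b_p}`, `E = {e₁ < ⋯ < e_q}` of `{1, …, n}`. This is an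
induction on `n`: in a word for a Coxeter element, `s_{n-1}` commutes with every letter except
`s_{n-2}`, so it can be moved to one end of the word. The final (initial) letters of such a cycle
`c` are the descents of `c` (of `c⁻¹`), and they determine `(B, E)`. This gives the existence of
`c`, and shows that every admissible `c` is the cycle of `(B, E)`.

For that cycle, labelling the box `(i, j)` of `λ(B, E)` by the transposition `(b_i, e_{q+1-j})`
identifies `G_λ(m)` with the full subquiver of `AR_m(c)` on `B × E`: the arrow
`(b, e) → (c b, e)` goes one row down and `(b, e) → (b, c e)` one column right, and the maximal
box of `D_m(λ)` is `(#{b ≤ m}, #{e > m})`, so the labels lying in `AR_m(c)` are exactly the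
labels of the boxes of `G_λ(m)`. No arrow leaves `B × E` and `f̄` vanishes off it, so every tuple of paths in `AR_m(c)`
can be cut down to `B × E`. Hence both quivers have the same `M_ℓ`, hence the same
Greene–Kleitman invariants.
-/

noncomputable section

namespace RSKPaper

/-! ### Directed graphs, paths and Greene–Kleitman invariants -/

/-- A path in the directed graph with vertex set `V` and arrow relation `A`:
a nonempty list of vertices of `V`, consecutive ones joined by arrows. -/
def IsPath {α : Type*} (V : Set α) (A : α → α → Prop) (l : List α) : Prop :=
  l ≠ [] ∧ (∀ v ∈ l, v ∈ V) ∧ l.Chain' A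

/-- The `f`-weight of an `ℓ`-tuple of paths: the sum of `f` over the union of
the supports of the paths. -/
def wt {α : Type*} [DecidableEq α] (f : α → ℕ) {ℓ : ℕ} (γ : Fin ℓ → List α) : ℕ :=
  ∑ v ∈ Finset.univ.biUnion (fun i => (γ i).toFinset), f v

/-- `MGK V A f ℓ` is `M_ℓ^G(f)`: the maximal `f`-weight of an `ℓ`-tuple of paths
in the graph `G = (V, A)` (and `0` for `ℓ = 0`). -/
def MGK {α : Type*} [DecidableEq α] (V : Set α) (A : α → α → Prop) (f : α → ℕ) (ℓ : ℕ) : ℕ :=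
  sSup {w | ∃ γ : Fin ℓ → List α, (∀ i, IsPath V A (γ i)) ∧ w = wt f γ}

/-- The Greene–Kleitman invariant, `0`-indexed: `GK V A f k` is the `(k+1)`-st
part `M_{k+1}^G(f) - M_k^G(f)` of `GK_G(f)`. -/
def GK {α : Type*} [DecidableEq α] (V : Set α) (A : α → α → Prop) (f : α → ℕ) (k : ℕ) : ℕ :=
  MGK V A f (k + 1) - MGK V A f k

/-! ### Integer partitions, Ferrers diagrams, diagonals -/

/-- `lam : ℕ → ℕ` (with `lam i` the `i`-th part for `i ≥ 1`) is an integer partition: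
weakly decreasing with finitely many nonzero terms. -/
def IsPartition (lam : ℕ → ℕ) : Prop :=
  (∀ i, 1 ≤ i → lam (i + 1) ≤ lam i) ∧ ∃ N, ∀ i, N ≤ i → lam i = 0

/-- The Ferrers diagram: pairs of positive integers `(i, j)` with `j ≤ lam i`. -/
def Fer (lam : ℕ → ℕ) : Set (ℕ × ℕ) := {p | 1 ≤ p.1 ∧ 1 ≤ p.2 ∧ p.2 ≤ lam p.1}

/-- The hook length `h_λ(1,1)` of the box `(1,1)`. -/
def hook11 (lam : ℕ → ℕ) : ℕ := {p ∈ Fer lam | p.1 = 1 ∨ p.2 = 1}.ncard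

/-- The `m`-th diagonal `D_m(λ)`. -/
def diag (lam : ℕ → ℕ) (m : ℤ) : Set (ℕ × ℕ) :=
  {p ∈ Fer lam | (p.1 : ℤ) - (p.2 : ℤ) + (lam 1 : ℤ) = m}

/-- The arrows of the graph `G_λ`. -/
def GArrow (lam : ℕ → ℕ) (p q : ℕ × ℕ) : Prop :=
  p ∈ Fer lam ∧ q ∈ Fer lam ∧ (q = (p.1 + 1, p.2) ∨ q = (p.1, p.2 + 1))

/-- The order ideal of `Fer lam` generated by `uv` (the vertex set of `G_λ(m)`
when `uv` is the maximal box of the `m`-th diagonal). -/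
def ideal (lam : ℕ → ℕ) (uv : ℕ × ℕ) : Set (ℕ × ℕ) := {p ∈ Fer lam | p ≤ uv}

/-! ### Fillings and reverse plane partitions -/

/-- A filling of shape `λ`. -/
def Filling (lam : ℕ → ℕ) : Type := Fer lam → ℕ

/-- Extend a filling of shape `λ` by zero to all of `ℕ × ℕ`. -/
def extendF (lam : ℕ → ℕ) (f : Filling lam) : ℕ × ℕ → ℕ :=
  Function.extend Subtype.val f (fun _ => 0)

/-- A reverse plane partition: a filling weakly increasing for the
componentwise order. -/
def IsRPP (lam : ℕ → ℕ) (g : Filling lam) : Prop :=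
  ∀ p q : Fer lam, (p : ℕ × ℕ) ≤ (q : ℕ × ℕ) → g p ≤ g q

/-- `Φ` is the map `RSK_λ` of Gansner: for every box `p` on the `m`-th diagonal,
whose maximal box is `uv`, the value of `Φ f` at `p` is the `(u_m - i + 1)`-st part
(1-indexed; `u_m - i` with our 0-indexed `GK`) of the Greene–Kleitman invariant of
`f` on `G_λ(m)`. -/
def IsGansnerRSK (lam : ℕ → ℕ) (Φ : Filling lam → Filling lam) : Prop :=
  ∀ (f : Filling lam) (m : ℤ) (uv : ℕ × ℕ), IsGreatest (diag lam m) uv →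
    ∀ p, ∀ hp : p ∈ diag lam m,
      Φ f ⟨p, hp.1⟩ = GK (ideal lam uv) (GArrow lam) (extendF lam f) (uv.1 - p.1)

/-! ### Interval bipartitions -/

/-- `(B, E)` is an interval bipartition: disjoint subsets of the positive integers
whose union is an integer interval `{i, …, j}` with `1 ≤ i ≤ j`. -/
def IsIntervalBipartition (B E : Finset ℕ) : Prop :=
  Disjoint B E ∧ ∃ i j, 1 ≤ i ∧ i ≤ j ∧ B ∪ E = Finset.Icc i j

/-- An interval bipartition is elementary if `1 ∈ B` and `max (B ∪ E) ∈ E`. -/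
def IsElementary (B E : Finset ℕ) : Prop :=
  1 ∈ B ∧ ∃ M ∈ E, ∀ x ∈ B ∪ E, x ≤ M

/-- The `i`-th smallest element (1-indexed) of a finite set of naturals
(junk value `0` out of range). -/
def nth (B : Finset ℕ) (i : ℕ) : ℕ := (B.sort (· ≤ ·)).getD (i - 1) 0

/-- The partition `λ(B, E)`: `λ(B,E)_i = #{e ∈ E | b_i < e}` for `1 ≤ i ≤ #B`,
and `0` otherwise. -/
def lamBE (B E : Finset ℕ) (i : ℕ) : ℕ :=
  if 1 ≤ i ∧ i ≤ B.card then (E.filter (fun e => nth B i < e)).card else 0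

/-! ### Symmetric groups, Coxeter elements, Auslander–Reiten quivers -/

/-- `c` lies in the copy of `S_n` inside `Equiv.Perm ℕ` permuting `{1, …, n}`. -/
def InSymm (n : ℕ) (c : Equiv.Perm ℕ) : Prop := ∀ x, x = 0 ∨ n < x → c x = x

/-- The adjacent transposition `s_i = (i, i+1)`. -/
def adjT (i : ℕ) : Equiv.Perm ℕ := Equiv.swap i (i + 1)

/-- A Coxeter element of `S_n`: a product of all of `s_1, …, s_{n-1}`, each
appearing exactly once, in some order. -/
def IsCoxeterElement (n : ℕ) (c : Equiv.Perm ℕ) : Prop :=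
  ∃ l : List ℕ, l.Perm (List.Ico 1 n) ∧ c = (l.map adjT).prod

/-- The Coxeter length of `w ∈ S_n`: the least number of adjacent transpositions
`s_1, …, s_{n-1}` needed to express `w` as a product. -/
def lenS (n : ℕ) (w : Equiv.Perm ℕ) : ℕ :=
  sInf {k | ∃ l : List ℕ, l.length = k ∧ (∀ i ∈ l, 1 ≤ i ∧ i < n) ∧ w = (l.map adjT).prod}

/-- `s_i` is initial in `w`, i.e. `ℓ(s_i w) < ℓ(w)`. -/
def IsInitialIn (n i : ℕ) (w : Equiv.Perm ℕ) : Prop := lenS n (adjT i * w) < lenS n w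

/-- `s_i` is final in `w`, i.e. `ℓ(w s_i) < ℓ(w)`. -/
def IsFinalIn (n i : ℕ) (w : Equiv.Perm ℕ) : Prop := lenS n (w * adjT i) < lenS n w

/-- The vertices of the Auslander–Reiten quiver `AR(c)`: the transpositions
`(i, j)` with `1 ≤ i < j ≤ n`. -/
def ARVertex (n : ℕ) (p : ℕ × ℕ) : Prop := 1 ≤ p.1 ∧ p.1 < p.2 ∧ p.2 ≤ n

/-- The arrows of `AR(c)`: `(i,j) → (i, c j)` whenever `i < c j`, and
`(i,j) → (c i, j)` whenever `c i < j`. -/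
def ARArrow (n : ℕ) (c : Equiv.Perm ℕ) (p q : ℕ × ℕ) : Prop :=
  ARVertex n p ∧ ARVertex n q ∧
    ((p.1 < c p.2 ∧ q = (p.1, c p.2)) ∨ (c p.1 < p.2 ∧ q = (c p.1, p.2)))

/-- The vertex set of the full subquiver `AR_m(c)`: transpositions `(i, j)`
with `i ≤ m < j`. -/
def ARmSet (n m : ℕ) : Set (ℕ × ℕ) := {p | ARVertex n p ∧ p.1 ≤ m ∧ m < p.2}

/-- The labelling of the box `(i, j)` of `Fer λ(B,E)` by the transposition
`(b_i, e_{q-j+1})`. -/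
def boxToTransp (B E : Finset ℕ) (p : ℕ × ℕ) : ℕ × ℕ :=
  (nth B p.1, nth E (E.card - p.2 + 1))

/-- `fbar` is the filling `f̄` of `AR(c)` associated to the filling `f` of shape `λ`:
`f̄(b_i, e_{q-j+1}) = f (i, j)` for boxes `(i,j) ∈ Fer λ`, and `f̄ = 0` elsewhere. -/
def IsBarOf (lam : ℕ → ℕ) (B E : Finset ℕ) (f : Filling lam) (fbar : ℕ × ℕ → ℕ) : Prop :=
  (∀ p : Fer lam, fbar (boxToTransp B E (p : ℕ × ℕ)) = f p) ∧
  (∀ x : ℕ × ℕ, (∀ p : Fer lam, x ≠ boxToTransp B E (p : ℕ × ℕ)) → fbar x = 0)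

/-- `Φ` is the map `RSK_{λ,c}`: for every box `p` on the `m`-th diagonal of `λ`,
whose maximal box is `uv`, the value of `Φ f` at `p` is the `(u_m - i + 1)`-st part
(1-indexed; `u_m - i` with our 0-indexed `GK`) of the Greene–Kleitman invariant
of `f̄` on `AR_m(c)`. -/
def IsCoxRSK (lam : ℕ → ℕ) (B E : Finset ℕ) (n : ℕ) (c : Equiv.Perm ℕ)
    (Φ : Filling lam → Filling lam) : Prop :=
  ∀ (f : Filling lam) (fbar : ℕ × ℕ → ℕ), IsBarOf lam B E f fbar →
    ∀ m : ℕ, 1 ≤ m → m ≤ n - 1 →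
      ∀ uv : ℕ × ℕ, IsGreatest (diag lam (m : ℤ)) uv →
        ∀ p, ∀ hp : p ∈ diag lam (m : ℤ),
          Φ f ⟨p, hp.1⟩ = GK (ARmSet n m) (ARArrow n c) fbar (uv.1 - p.1)

open Finset

section Rank

def rank (S : Finset ℕ) (x : ℕ) : ℕ := #(S.filter (· ≤ x))

variable {S : Finset ℕ}

lemma rank_mono {x y : ℕ} (h : x ≤ y) : rank S x ≤ rank S y :=
  card_le_card (monotone_filter_right S fun _ _ hz => hz.trans h)

lemma rank_lt_rank {x y : ℕ} (h : x < y) (hy : y ∈ S) : rank S x < rank S y := by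
  refine card_lt_card ((ssubset_iff_of_subset ?_).2 ⟨y, ?_, ?_⟩)
  · exact monotone_filter_right S fun _ _ hz => hz.trans h.le
  · simp [hy]
  · simp [h]

lemma rank_le_card (x : ℕ) : rank S x ≤ #S := card_filter_le _ _

lemma one_le_rank {x : ℕ} (hx : x ∈ S) : 1 ≤ rank S x :=
  card_pos.2 ⟨x, by simp [hx]⟩

lemma card_filter_lt_add_rank (x : ℕ) : #(S.filter (x < ·)) + rank S x = #S := by
  rw [rank, ← card_filter_add_card_filter_not (s := S) (· ≤ x), add_comm]
  simp only [not_le]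

lemma rank_eq_count (x : ℕ) : rank S x = Nat.count (· ∈ S) (x + 1) := by
  rw [Nat.count_eq_card_filter_range, rank]
  congr 1
  ext y
  simp [and_comm]

lemma nth_eq_nat_nth (i : ℕ) : nth S i = Nat.nth (· ∈ S) (i - 1) := by
  have hS : (Set.ofPred (· ∈ S)).Finite := S.finite_toSet
  rw [nth, Nat.nth_eq_getD_sort hS]
  congr
  ext
  simp

lemma nth_mem {i : ℕ} (hi : 1 ≤ i) (hiS : i ≤ #S) : nth S i ∈ S := by
  rw [nth_eq_nat_nth]
  exact Nat.nth_mem_of_lt_card S.finite_toSet (by simp; omega)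

lemma rank_nth {i : ℕ} (hi : 1 ≤ i) (hiS : i ≤ #S) : rank S (nth S i) = i := by
  rw [rank_eq_count, nth_eq_nat_nth, Nat.count_nth_succ (fun hf => by simp; omega)]
  omega

lemma nth_rank {x : ℕ} (hx : x ∈ S) : nth S (rank S x) = x := by
  rw [rank_eq_count, Nat.count_succ, if_pos hx, nth_eq_nat_nth, Nat.add_sub_cancel,
    Nat.nth_count hx]

lemma nth_le_iff_le_rank {i : ℕ} (hi : 1 ≤ i) (hiS : i ≤ #S) (x : ℕ) :
    nth S i ≤ x ↔ i ≤ rank S x := by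
  refine ⟨fun h => rank_nth hi hiS ▸ rank_mono h, fun h => ?_⟩
  by_contra! hlt
  have := rank_lt_rank hlt (nth_mem hi hiS)
  rw [rank_nth hi hiS] at this
  omega

lemma lt_nth_iff_rank_lt {i : ℕ} (hi : 1 ≤ i) (hiS : i ≤ #S) (x : ℕ) :
    x < nth S i ↔ rank S x < i := by
  rw [← not_le, nth_le_iff_le_rank hi hiS, not_le]

lemma rank_eq_rank_add_one {x y : ℕ} (hy : y ∈ S) (hxy : x < y)
    (hsucc : ∀ z ∈ S, x < z → y ≤ z) : rank S y = rank S x + 1 := by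
  rw [rank, rank, ← card_insert_of_notMem (s := S.filter (· ≤ x)) (a := y) (by simp; omega)]
  congr 1
  ext z
  simp only [mem_filter, mem_insert]
  constructor
  · rintro ⟨hz, hzy⟩
    by_cases hzx : z ≤ x
    · exact Or.inr ⟨hz, hzx⟩
    · exact Or.inl (le_antisymm hzy (hsucc z hz (by omega)))
  · rintro (rfl | ⟨hz, hzx⟩)
    · exact ⟨hy, le_rfl⟩
    · exact ⟨hz, by omega⟩

end Rank

section Length

lemma adjT_apply_left (i : ℕ) : adjT i i = i + 1 := Equiv.swap_apply_left _ _

lemma adjT_apply_right (i : ℕ) : adjT i (i + 1) = i := Equiv.swap_apply_right _ _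

lemma adjT_apply_of_ne {i x : ℕ} (h₁ : x ≠ i) (h₂ : x ≠ i + 1) : adjT i x = x :=
  Equiv.swap_apply_of_ne_of_ne h₁ h₂

lemma adjT_apply (i x : ℕ) : adjT i x = if x = i then i + 1 else if x = i + 1 then i else x :=
  Equiv.swap_apply_def _ _ _

lemma adjT_mul_self (i : ℕ) : adjT i * adjT i = 1 := Equiv.swap_mul_self _ _

lemma adjT_inv (i : ℕ) : (adjT i)⁻¹ = adjT i := Equiv.swap_inv _ _

lemma adjT_symm (i : ℕ) : (adjT i).symm = adjT i := Equiv.symm_swap _ _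

lemma inSymm_adjT {n i : ℕ} (hi : 1 ≤ i) (hin : i < n) : InSymm n (adjT i) :=
  fun _ hx => adjT_apply_of_ne (by omega) (by omega)

lemma InSymm.mul {n : ℕ} {u v : Equiv.Perm ℕ} (hu : InSymm n u) (hv : InSymm n v) :
    InSymm n (u * v) := fun x hx => by rw [Equiv.Perm.mul_apply, hv x hx, hu x hx]

lemma inSymm_prod_adjT {n : ℕ} {l : List ℕ} (hl : ∀ j ∈ l, 1 ≤ j ∧ j < n) :
    InSymm n (l.map adjT).prod := by
  induction l with
  | nil => exact fun _ _ => rfl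
  | cons a l ih =>
    rw [List.map_cons, List.prod_cons]
    exact (inSymm_adjT (hl a (by simp)).1 (hl a (by simp)).2).mul
      (ih fun j hj => hl j (List.mem_cons_of_mem a hj))

lemma InSymm.apply_mem {n : ℕ} {w : Equiv.Perm ℕ} (hw : InSymm n w) {x : ℕ} (hx : 1 ≤ x)
    (hxn : x ≤ n) : 1 ≤ w x ∧ w x ≤ n := by
  by_contra! h
  have hfix : w (w x) = w x := hw (w x) (by omega)
  rw [w.injective hfix] at h
  omega

lemma InSymm.inv {n : ℕ} {w : Equiv.Perm ℕ} (hw : InSymm n w) : InSymm n w⁻¹ :=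
  fun x hx => by rw [Equiv.Perm.inv_eq_iff_eq, hw x hx]

def inversions (n : ℕ) (w : Equiv.Perm ℕ) : Finset (ℕ × ℕ) :=
  (Icc 1 n ×ˢ Icc 1 n).filter fun p => p.1 < p.2 ∧ w p.2 < w p.1

lemma mem_inversions {n : ℕ} {w : Equiv.Perm ℕ} {a b : ℕ} :
    (a, b) ∈ inversions n w ↔ (1 ≤ a ∧ a ≤ n) ∧ (1 ≤ b ∧ b ≤ n) ∧ a < b ∧ w b < w a := by
  simp [inversions, and_assoc]

lemma inversions_mul_adjT {n i : ℕ} {w : Equiv.Perm ℕ} (hi : 1 ≤ i) (hin : i < n)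
    (h : w i < w (i + 1)) :
    inversions n (w * adjT i) = insert (i, i + 1)
      ((inversions n w).map (Equiv.prodCongr (adjT i) (adjT i)).toEmbedding) := by
  ext ⟨a, b⟩
  simp only [mem_insert, mem_map_equiv, Equiv.prodCongr_symm, adjT_symm, Equiv.prodCongr_apply,
    Prod.map, mem_inversions, Prod.mk.injEq, Equiv.Perm.mul_apply]
  rw [adjT_apply, adjT_apply]
  grind

lemma inversions_one (n : ℕ) : inversions n 1 = ∅ := by
  ext ⟨a, b⟩
  simp only [mem_inversions, Equiv.Perm.coe_one, id_eq, notMem_empty, iff_false]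
  omega

lemma card_inversions_mul_adjT_of_lt {n i : ℕ} {w : Equiv.Perm ℕ} (hi : 1 ≤ i) (hin : i < n)
    (h : w i < w (i + 1)) : #(inversions n (w * adjT i)) = #(inversions n w) + 1 := by
  rw [inversions_mul_adjT hi hin h, card_insert_of_notMem, card_map]
  simp [mem_map_equiv, adjT_symm, mem_inversions, adjT_apply_left, adjT_apply_right]

lemma card_inversions_mul_adjT_of_gt {n i : ℕ} {w : Equiv.Perm ℕ} (hi : 1 ≤ i) (hin : i < n)
    (h : w (i + 1) < w i) : #(inversions n (w * adjT i)) + 1 = #(inversions n w) := by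
  have := card_inversions_mul_adjT_of_lt (w := w * adjT i) hi hin
    (by simpa [adjT_apply_left, adjT_apply_right] using h)
  rwa [mul_assoc, adjT_mul_self, mul_one, eq_comm] at this

lemma card_inversions_le_length {n : ℕ} {l : List ℕ} (hl : ∀ j ∈ l, 1 ≤ j ∧ j < n) :
    #(inversions n (l.map adjT).prod) ≤ l.length := by
  induction l using List.reverseRecOn with
  | nil => simp [inversions_one]
  | append_singleton l a ih =>
    obtain ⟨ha, han⟩ := hl a (by simp)
    have ih := ih fun j hj => hl j (by simp [hj])
    simp only [List.map_append, List.prod_append, List.length_append, List.map_cons,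
      List.map_nil, List.prod_cons, List.prod_nil, mul_one, List.length_singleton]
    generalize (l.map adjT).prod = w at ih ⊢
    rcases lt_or_gt_of_ne (w.injective.ne (show a ≠ a + 1 by omega)) with h | h
    · rw [card_inversions_mul_adjT_of_lt ha han h]
      omega
    · have := card_inversions_mul_adjT_of_gt ha han h
      omega

lemma eq_one_of_forall_lt_apply_succ {n : ℕ} {w : Equiv.Perm ℕ} (hw : InSymm n w)
    (h : ∀ i, 1 ≤ i → i < n → w i < w (i + 1)) : w = 1 := by
  have hle : ∀ x ∈ Icc 1 n, x ≤ w x := by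
    intro x hx
    rw [mem_Icc] at hx
    induction x, hx.1 using Nat.le_induction with
    | base => exact (hw.apply_mem le_rfl hx.2).1
    | succ x hx1 ih =>
      have := ih ⟨hx1, by omega⟩
      have := h x hx1 (by omega)
      omega
  -- `w` permutes `{1, …, n}`, so `∑ w x = ∑ x` forces equality in `x ≤ w x`.
  have hsum : ∑ x ∈ Icc 1 n, x = ∑ x ∈ Icc 1 n, w x :=
    (w.sum_comp (Icc 1 n) id fun x hx => by
      by_contra hxI
      simp only [coe_Icc, Set.mem_Icc, not_and_or, not_le] at hxI
      exact hx (hw x (by omega))).symm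
  have hfix := (sum_eq_sum_iff_of_le hle).1 hsum
  ext x
  by_cases hx : 1 ≤ x ∧ x ≤ n
  · exact (hfix x (mem_Icc.2 hx)).symm
  · exact hw x (by omega)

lemma exists_word_length_eq_card_inversions {n : ℕ} {w : Equiv.Perm ℕ} (hw : InSymm n w) :
    ∃ l : List ℕ, l.length = #(inversions n w) ∧ (∀ j ∈ l, 1 ≤ j ∧ j < n) ∧
      w = (l.map adjT).prod := by
  induction hN : #(inversions n w) generalizing w with
  | zero =>
    refine ⟨[], rfl, by simp, eq_one_of_forall_lt_apply_succ hw fun i hi hin => ?_⟩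
    by_contra! h
    have hi' : (i, i + 1) ∈ inversions n w := mem_inversions.2
      ⟨⟨hi, by omega⟩, ⟨by omega, by omega⟩, by omega, lt_of_le_of_ne h (w.injective.ne (by omega))⟩
    rw [card_eq_zero] at hN
    simp [hN] at hi'
  | succ N ih =>
    obtain ⟨i, hi, hin, hdesc⟩ : ∃ i, 1 ≤ i ∧ i < n ∧ w (i + 1) < w i := by
      by_contra! h
      rw [eq_one_of_forall_lt_apply_succ hw fun i hi hin =>
        lt_of_le_of_ne (h i hi hin) (w.injective.ne (by omega)), inversions_one] at hN
      simp at hN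
    obtain ⟨l, hlen, hl, hprod⟩ := ih (hw.mul (inSymm_adjT hi hin))
      (by have := card_inversions_mul_adjT_of_gt hi hin hdesc; omega)
    refine ⟨l ++ [i], by simp [hlen], fun j hj => ?_, ?_⟩
    · rcases List.mem_append.1 hj with hj | hj
      · exact hl j hj
      · rw [List.mem_singleton.1 hj]
        exact ⟨hi, hin⟩
    · simp [← hprod, mul_assoc, adjT_mul_self]

lemma lenS_eq_card_inversions {n : ℕ} {w : Equiv.Perm ℕ} (hw : InSymm n w) :
    lenS n w = #(inversions n w) := by
  obtain ⟨l, hlen, hl, hw⟩ := exists_word_length_eq_card_inversions hw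
  refine le_antisymm (Nat.sInf_le ⟨l, hlen, hl, hw⟩) (le_csInf ⟨_, l, rfl, hl, hw⟩ ?_)
  rintro k ⟨l', rfl, hl', rfl⟩
  exact card_inversions_le_length hl'

lemma isFinalIn_iff_apply_succ_lt {n i : ℕ} {w : Equiv.Perm ℕ} (hw : InSymm n w) (hi : 1 ≤ i)
    (hin : i < n) : IsFinalIn n i w ↔ w (i + 1) < w i := by
  rw [IsFinalIn, lenS_eq_card_inversions hw,
    lenS_eq_card_inversions (hw.mul (inSymm_adjT hi hin))]
  rcases lt_or_gt_of_ne (w.injective.ne (show i ≠ i + 1 by omega)) with h | h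
  · rw [card_inversions_mul_adjT_of_lt hi hin h]
    omega
  · have := card_inversions_mul_adjT_of_gt hi hin h
    omega

lemma prod_reverse_map_adjT (l : List ℕ) : (l.reverse.map adjT).prod = (l.map adjT).prod⁻¹ := by
  rw [List.map_reverse, List.prod_reverse_noncomm, List.map_map]
  simp [Function.comp_def, adjT_inv]

lemma lenS_inv_le {n : ℕ} {w : Equiv.Perm ℕ} (hw : InSymm n w) : lenS n w⁻¹ ≤ lenS n w := by
  obtain ⟨l, hlen, hl, hlw⟩ := exists_word_length_eq_card_inversions hw
  rw [lenS_eq_card_inversions hw, ← hlen, hlw, ← prod_reverse_map_adjT]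
  exact Nat.sInf_le ⟨l.reverse, List.length_reverse, fun j hj => hl j (List.mem_reverse.1 hj), rfl⟩

lemma lenS_inv {n : ℕ} {w : Equiv.Perm ℕ} (hw : InSymm n w) : lenS n w⁻¹ = lenS n w :=
  le_antisymm (lenS_inv_le hw) (by simpa using lenS_inv_le hw.inv)

lemma isInitialIn_iff_inv_apply_succ_lt {n i : ℕ} {w : Equiv.Perm ℕ} (hw : InSymm n w)
    (hi : 1 ≤ i) (hin : i < n) : IsInitialIn n i w ↔ w⁻¹ (i + 1) < w⁻¹ i := by
  rw [← isFinalIn_iff_apply_succ_lt hw.inv hi hin, IsInitialIn, IsFinalIn,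
    ← lenS_inv ((inSymm_adjT hi hin).mul hw), mul_inv_rev, adjT_inv, lenS_inv hw]

end Length

section CoxeterCycle

structure IsElementaryBipartition (n : ℕ) (B E : Finset ℕ) : Prop where
  mem_B : ∀ b ∈ B, 1 ≤ b ∧ b < n
  mem_E_iff : ∀ x, x ∈ E ↔ 1 ≤ x ∧ x ≤ n ∧ x ∉ B
  one_mem_B : 1 ∈ B

namespace IsElementaryBipartition

variable {n : ℕ} {B E : Finset ℕ}

lemma two_le (h : IsElementaryBipartition n B E) : 2 ≤ n := by
  have := h.mem_B 1 h.one_mem_B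
  omega

lemma last_mem_E (h : IsElementaryBipartition n B E) : n ∈ E :=
  (h.mem_E_iff n).2 ⟨by have := h.two_le; omega, le_rfl, fun hn => by have := h.mem_B n hn; omega⟩

lemma mem_E (h : IsElementaryBipartition n B E) {e : ℕ} (he : e ∈ E) : 1 ≤ e ∧ e ≤ n := by
  have := (h.mem_E_iff e).1 he
  omega

lemma notMem_B_of_mem_E (h : IsElementaryBipartition n B E) {x : ℕ} (hx : x ∈ E) : x ∉ B :=
  ((h.mem_E_iff x).1 hx).2.2

lemma notMem_E_of_mem_B (h : IsElementaryBipartition n B E) {x : ℕ} (hx : x ∈ B) : x ∉ E :=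
  fun hxE => h.notMem_B_of_mem_E hxE hx

lemma mem_B_or_mem_E (h : IsElementaryBipartition n B E) {x : ℕ} (hx : 1 ≤ x) (hxn : x ≤ n) :
    x ∈ B ∨ x ∈ E := by
  by_cases hxB : x ∈ B
  · exact Or.inl hxB
  · exact Or.inr ((h.mem_E_iff x).2 ⟨hx, hxn, hxB⟩)

lemma eq_E (h : IsElementaryBipartition n B E) {E' : Finset ℕ}
    (h' : IsElementaryBipartition n B E') : E = E' := by
  ext x
  rw [h.mem_E_iff, h'.mem_E_iff]

lemma insert_B (h : IsElementaryBipartition n B E) :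
    IsElementaryBipartition (n + 1) (insert n B) (insert (n + 1) (E.erase n)) where
  mem_B b hb := by
    rcases mem_insert.1 hb with rfl | hb
    · have := h.two_le; omega
    · have := h.mem_B b hb; omega
  mem_E_iff x := by
    have := h.mem_B x
    have := h.mem_E_iff x
    grind
  one_mem_B := mem_insert_of_mem h.one_mem_B

lemma insert_E (h : IsElementaryBipartition n B E) :
    IsElementaryBipartition (n + 1) B (insert (n + 1) E) where
  mem_B b hb := by have := h.mem_B b hb; omega
  mem_E_iff x := by
    have := h.mem_B x
    have := h.mem_E_iff x
    grind
  one_mem_B := h.one_mem_B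

lemma erase_B (h : IsElementaryBipartition (n + 1) B E) (hn : 2 ≤ n) :
    IsElementaryBipartition n (B.erase n) (insert n (E.erase (n + 1))) where
  mem_B b hb := by have := h.mem_B b (mem_of_mem_erase hb); have := ne_of_mem_erase hb; omega
  mem_E_iff x := by
    have := h.mem_B x
    have := h.mem_E_iff x
    grind
  one_mem_B := mem_erase.2 ⟨by omega, h.one_mem_B⟩

lemma erase_E (h : IsElementaryBipartition (n + 1) B E) (hnE : n ∈ E) :
    IsElementaryBipartition n B (E.erase (n + 1)) where
  mem_B b hb := by
    have := h.mem_B b hb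
    have : b ≠ n := fun hbn => h.notMem_E_of_mem_B hb (hbn ▸ hnE)
    omega
  mem_E_iff x := by
    have := h.mem_B x
    have := h.mem_E_iff x
    grind
  one_mem_B := h.one_mem_B

end IsElementaryBipartition

/-- `c` is the `n`-cycle `(b₁ b₂ ⋯ b_p e_q e_{q-1} ⋯ e₁)`, where `b₁ < ⋯ < b_p` and
`e₁ < ⋯ < e_q` enumerate `B` and `E` (so `b₁ = 1` and `e_q = n`). -/
def IsCoxeterCycle (n : ℕ) (B E : Finset ℕ) (c : Equiv.Perm ℕ) : Prop :=
  (∀ b ∈ B, c b ∈ insert n B ∧ b < c b ∧ ∀ b' ∈ B, b < b' → c b ≤ b') ∧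
  (∀ e ∈ E, c e ∈ insert 1 E ∧ c e < e ∧ ∀ e' ∈ E, e' < e → e' ≤ c e)

namespace IsCoxeterCycle

variable {n : ℕ} {B E : Finset ℕ} {c : Equiv.Perm ℕ}

lemma apply_succ_lt_apply_iff (hB : IsElementaryBipartition n B E) (hc : IsCoxeterCycle n B E c)
    {i : ℕ} (hi : 1 ≤ i) (hin : i < n) : c (i + 1) < c i ↔ i ∈ B ∧ i + 1 ∈ E := by
  rcases hB.mem_B_or_mem_E hi hin.le with hiB | hiE <;>
    rcases hB.mem_B_or_mem_E (x := i + 1) (by omega) hin with hjB | hjE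
  · have := (hc.1 i hiB).2.2 _ hjB (by omega)
    have := (hc.1 _ hjB).2.1
    simp only [hB.notMem_E_of_mem_B hjB, and_false, iff_false]
    omega
  · have := (hc.1 i hiB).2.1
    have := (hc.2 _ hjE).2.1
    simp only [hiB, hjE, and_self, iff_true]
    omega
  · have := (hc.2 i hiE).2.1
    have := (hc.1 _ hjB).2.1
    simp only [hB.notMem_E_of_mem_B hjB, and_false, iff_false]
    omega
  · have := (hc.2 _ hjE).2.2 i hiE (by omega)
    have := (hc.2 _ hjE).2.1
    have := (hc.2 i hiE).2.1
    simp only [hB.notMem_B_of_mem_E hiE, false_and, iff_false]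
    omega

lemma inv_apply_lt_of_mem_B (hB : IsElementaryBipartition n B E) (hc : IsCoxeterCycle n B E c)
    (hsymm : InSymm n c) {b : ℕ} (hb : b ∈ B) (hb2 : 2 ≤ b) : c⁻¹ b < b := by
  have hcb : c (c⁻¹ b) = b := by simp
  have hbn := hB.mem_B b hb
  obtain ⟨h1, h2⟩ := hsymm.inv.apply_mem (x := b) (by omega) (by omega)
  rcases hB.mem_B_or_mem_E h1 h2 with hzB | hzE
  · have := (hc.1 _ hzB).2.1
    omega
  · have := (hc.2 _ hzE).1
    rw [hcb, mem_insert] at this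
    rcases this with rfl | hbE
    · omega
    · exact absurd hbE (hB.notMem_E_of_mem_B hb)

lemma lt_inv_apply_of_mem_E (hB : IsElementaryBipartition n B E) (hc : IsCoxeterCycle n B E c)
    (hsymm : InSymm n c) {e : ℕ} (he : e ∈ E) (hen : e < n) : e < c⁻¹ e := by
  have hce : c (c⁻¹ e) = e := by simp
  have hen' := hB.mem_E he
  obtain ⟨h1, h2⟩ := hsymm.inv.apply_mem (x := e) (by omega) (by omega)
  rcases hB.mem_B_or_mem_E h1 h2 with hzB | hzE
  · have := (hc.1 _ hzB).1
    rw [hce, mem_insert] at this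
    rcases this with rfl | heB
    · omega
    · exact absurd he (hB.notMem_E_of_mem_B heB)
  · have := (hc.2 _ hzE).2.1
    omega

lemma inv_apply_succ_lt_inv_apply_iff (hB : IsElementaryBipartition n B E)
    (hc : IsCoxeterCycle n B E c) (hsymm : InSymm n c) {i : ℕ} (hi : 2 ≤ i) (hin : i + 2 ≤ n) :
    c⁻¹ (i + 1) < c⁻¹ i ↔ i ∈ E ∧ i + 1 ∈ B := by
  rcases hB.mem_B_or_mem_E (x := i) (by omega) (by omega) with hiB | hiE <;>
    rcases hB.mem_B_or_mem_E (x := i + 1) (by omega) (by omega) with hjB | hjE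
  · have hci : c i = i + 1 := by
      have := (hc.1 i hiB).2.2 _ hjB (by omega)
      have := (hc.1 i hiB).2.1
      omega
    have := hc.inv_apply_lt_of_mem_B hB hsymm hiB hi
    rw [Equiv.Perm.inv_eq_iff_eq.2 hci.symm]
    simp only [hB.notMem_E_of_mem_B hiB, false_and, iff_false]
    omega
  · have := hc.inv_apply_lt_of_mem_B hB hsymm hiB hi
    have := hc.lt_inv_apply_of_mem_E hB hsymm hjE (by omega)
    simp only [hB.notMem_E_of_mem_B hiB, false_and, iff_false]
    omega
  · have := hc.lt_inv_apply_of_mem_E hB hsymm hiE (by omega)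
    have := hc.inv_apply_lt_of_mem_B hB hsymm hjB (by omega)
    simp only [hiE, hjB, and_self, iff_true]
    omega
  · have hci : c (i + 1) = i := by
      have := (hc.2 _ hjE).2.2 i hiE (by omega)
      have := (hc.2 _ hjE).2.1
      omega
    have := hc.lt_inv_apply_of_mem_E hB hsymm hjE (by omega)
    rw [Equiv.Perm.inv_eq_iff_eq.2 hci.symm]
    simp only [hB.notMem_B_of_mem_E hjE, and_false, iff_false]
    omega

end IsCoxeterCycle

end CoxeterCycle

section CoxeterElements

namespace IsCoxeterCycle

variable {n : ℕ} {B E : Finset ℕ} {c : Equiv.Perm ℕ}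

lemma isFinalIn_iff (hB : IsElementaryBipartition n B E) (hc : IsCoxeterCycle n B E c)
    (hsymm : InSymm n c) {i : ℕ} (hi : 1 ≤ i) (hin : i ≤ n - 1) :
    IsFinalIn n i c ↔ i ∈ B ∧ i + 1 ∈ E := by
  have := hB.two_le
  rw [isFinalIn_iff_apply_succ_lt hsymm hi (by omega), hc.apply_succ_lt_apply_iff hB hi (by omega)]

lemma isInitialIn_iff (hB : IsElementaryBipartition n B E) (hc : IsCoxeterCycle n B E c)
    (hsymm : InSymm n c) {i : ℕ} (hi : 2 ≤ i) (hin : i ≤ n - 2) :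
    IsInitialIn n i c ↔ i ∈ E ∧ i + 1 ∈ B := by
  rw [isInitialIn_iff_inv_apply_succ_lt hsymm (by omega) (by omega),
    hc.inv_apply_succ_lt_inv_apply_iff hB hsymm hi (by omega)]

-- `c * s_n` agrees with `c` except that it sends `n ↦ n + 1 ↦ c n`.
lemma mul_adjT (hB : IsElementaryBipartition n B E) (hc : IsCoxeterCycle n B E c)
    (hsymm : InSymm n c) :
    IsCoxeterCycle (n + 1) (insert n B) (insert (n + 1) (E.erase n)) (c * adjT n) := by
  have hBn := hB.mem_B
  have hEn := hB.mem_E_iff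
  have hfix : c (n + 1) = n + 1 := hsymm (n + 1) (Or.inr (by omega))
  have hcn := hc.2 n hB.last_mem_E
  refine ⟨fun b hb => ?_, fun e he => ?_⟩
  · have := hc.1 b
    rw [Equiv.Perm.mul_apply, adjT_apply]
    grind
  · have := hc.2 e
    rw [Equiv.Perm.mul_apply, adjT_apply]
    grind

-- `s_n * c` agrees with `c` except that it sends `max B ↦ n + 1 ↦ n`.
lemma adjT_mul (hB : IsElementaryBipartition n B E) (hc : IsCoxeterCycle n B E c)
    (hsymm : InSymm n c) : IsCoxeterCycle (n + 1) B (insert (n + 1) E) (adjT n * c) := by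
  have hnE := hB.last_mem_E
  have hBn := hB.mem_B
  have hEn := hB.mem_E_iff
  have hfix : c (n + 1) = n + 1 := hsymm (n + 1) (Or.inr (by omega))
  refine ⟨fun b hb => ?_, fun e he => ?_⟩
  · have := hc.1 b hb
    rw [Equiv.Perm.mul_apply, adjT_apply]
    grind
  · have := hc.2 e
    rw [Equiv.Perm.mul_apply, adjT_apply]
    grind

end IsCoxeterCycle

lemma isElementaryBipartition_two : IsElementaryBipartition 2 {1} {2} where
  mem_B b hb := by rw [mem_singleton.1 hb]; omega
  mem_E_iff x := by simp only [mem_singleton]; omega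
  one_mem_B := mem_singleton_self 1

lemma isCoxeterCycle_two : IsCoxeterCycle 2 {1} {2} (adjT 1) := by
  refine ⟨fun b hb => ?_, fun e he => ?_⟩
  · rw [mem_singleton.1 hb, adjT_apply_left]
    simp
  · rw [mem_singleton.1 he, adjT_apply_right]
    simp

lemma forall_mem_of_perm_Ico {n : ℕ} {l : List ℕ} (hl : l.Perm (List.Ico 1 n)) :
    ∀ j ∈ l, 1 ≤ j ∧ j < n :=
  fun _ hj => List.Ico.mem.1 (hl.subset hj)

lemma commute_adjT {i j : ℕ} (h : j + 2 ≤ i) : Commute (adjT i) (adjT j) := by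
  refine Equiv.Perm.Disjoint.commute fun x => ?_
  by_cases hx : x = i ∨ x = i + 1
  · exact Or.inr (adjT_apply_of_ne (by omega) (by omega))
  · exact Or.inl (adjT_apply_of_ne (by omega) (by omega))

lemma commute_adjT_prod {i : ℕ} {L : List ℕ} (hL : ∀ j ∈ L, j + 2 ≤ i) :
    Commute (adjT i) (L.map adjT).prod :=
  Commute.list_prod_right _ _ fun _ hx => by
    obtain ⟨j, hj, rfl⟩ := List.mem_map.1 hx
    exact commute_adjT (hL j hj)

lemma IsElementaryBipartition.exists_isCoxeterCycle_prod {n : ℕ} {B E : Finset ℕ}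
    (h : IsElementaryBipartition n B E) :
    ∃ l : List ℕ, l.Perm (List.Ico 1 n) ∧ IsCoxeterCycle n B E (l.map adjT).prod := by
  induction n, h.two_le using Nat.le_induction generalizing B E with
  | base =>
    have hB : B = {1} := by
      ext x
      refine ⟨fun hx => mem_singleton.2 (by have := h.mem_B x hx; omega), fun hx => ?_⟩
      exact mem_singleton.1 hx ▸ h.one_mem_B
    subst hB
    rw [h.eq_E isElementaryBipartition_two]
    exact ⟨[1], List.Perm.refl _, by simpa using isCoxeterCycle_two⟩
  | succ n hn ih =>
    rcases h.mem_B_or_mem_E (x := n) (by omega) (by omega) with hnB | hnE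
    · have h' := h.erase_B hn
      obtain ⟨l, hl, hc⟩ := ih h'
      have hc' := hc.mul_adjT h' (inSymm_prod_adjT (forall_mem_of_perm_Ico hl))
      have h'' := h'.insert_B
      rw [insert_erase hnB] at hc' h''
      rw [h.eq_E h'']
      refine ⟨l ++ [n], ?_, by simpa using hc'⟩
      rw [List.Ico.succ_top (by omega)]
      exact hl.append_right [n]
    · have h' := h.erase_E hnE
      obtain ⟨l, hl, hc⟩ := ih h'
      rw [h.eq_E h'.insert_E]
      refine ⟨n :: l, ?_, by
        simpa using hc.adjT_mul h' (inSymm_prod_adjT (forall_mem_of_perm_Ico hl))⟩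
      rw [List.Ico.succ_top (by omega)]
      exact (hl.cons n).trans (List.perm_append_singleton n _).symm

lemma exists_isCoxeterCycle_prod {n : ℕ} (hn : 2 ≤ n) {l : List ℕ} (hl : l.Perm (List.Ico 1 n)) :
    ∃ B E, IsElementaryBipartition n B E ∧ IsCoxeterCycle n B E (l.map adjT).prod := by
  induction n, hn using Nat.le_induction generalizing l with
  | base =>
    rw [show List.Ico 1 2 = [1] from rfl, List.perm_singleton] at hl
    subst hl
    exact ⟨{1}, {2}, isElementaryBipartition_two, by simpa using isCoxeterCycle_two⟩
  | succ n hn ih =>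
    have hnl : n ∈ l := hl.mem_iff.2 (List.Ico.mem.2 ⟨by omega, by omega⟩)
    obtain ⟨A, A', rfl⟩ := List.append_of_mem hnl
    have hperm : (A ++ A').Perm (List.Ico 1 n) := by
      refine (List.perm_middle.symm.trans (hl.trans ?_)).cons_inv
      rw [List.Ico.succ_top (by omega)]
      exact List.perm_append_singleton n _
    obtain ⟨B, E, hB, hc⟩ := ih hperm
    have hsymm := inSymm_prod_adjT (forall_mem_of_perm_Ico hperm)
    have hdisj := (List.nodup_append.1 (hperm.nodup_iff.2 (List.Ico.nodup 1 n))).2.2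
    have hsmall : ∀ j ∈ A ++ A', j ≠ n - 1 → j + 2 ≤ n := fun j hj hne => by
      have := forall_mem_of_perm_Ico hperm j hj
      omega
    have hsplit : ((A ++ n :: A').map adjT).prod =
        (A.map adjT).prod * adjT n * (A'.map adjT).prod := by
      simp [mul_assoc]
    by_cases hA : n - 1 ∈ A
    · have hA' : ∀ j ∈ A', j + 2 ≤ n := fun j hj =>
        hsmall j (List.mem_append_right A hj) fun hj' => hdisj _ hA j hj hj'.symm
      refine ⟨_, _, hB.insert_B, ?_⟩
      rw [hsplit, mul_assoc, (commute_adjT_prod hA').eq, ← mul_assoc, ← List.prod_append,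
        ← List.map_append]
      exact hc.mul_adjT hB hsymm
    · have hA : ∀ j ∈ A, j + 2 ≤ n := fun j hj =>
        hsmall j (List.mem_append_left A' hj) fun hj' => hA (hj' ▸ hj)
      refine ⟨_, _, hB.insert_E, ?_⟩
      rw [hsplit, ← (commute_adjT_prod hA).eq, mul_assoc, ← List.prod_append, ← List.map_append]
      exact hc.adjT_mul hB hsymm

lemma IsElementaryBipartition.eq_B_of_descents {n : ℕ} {B E B' E' : Finset ℕ}
    (h : IsElementaryBipartition n B E) (h' : IsElementaryBipartition n B' E')
    (ha : ∀ i, 1 ≤ i → i ≤ n - 1 → (i ∈ B ∧ i + 1 ∈ E ↔ i ∈ B' ∧ i + 1 ∈ E'))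
    (hb : ∀ i, 2 ≤ i → i ≤ n - 2 → (i ∈ E ∧ i + 1 ∈ B ↔ i ∈ E' ∧ i + 1 ∈ B')) : B = B' := by
  have key : ∀ x, 1 ≤ x → x < n → (x ∈ B ↔ x ∈ B') := by
    intro x hx
    induction x, hx using Nat.le_induction with
    | base => exact fun _ => iff_of_true h.one_mem_B h'.one_mem_B
    | succ x hx ih =>
      intro hxn
      have ih := ih (by omega)
      by_cases hxB : x ∈ B
      · have hE : x + 1 ∈ E ↔ x + 1 ∈ E' := by simpa [hxB, ih.1 hxB] using ha x hx (by omega)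
        simp only [h.mem_E_iff, h'.mem_E_iff, show 1 ≤ x + 1 by omega, show x + 1 ≤ n by omega,
          true_and] at hE
        exact not_iff_not.1 hE
      · have hxE := (h.mem_E_iff x).2 ⟨hx, by omega, hxB⟩
        have hxE' := (h'.mem_E_iff x).2 ⟨hx, by omega, fun hxB' => hxB (ih.2 hxB')⟩
        have hx2 : 2 ≤ x := by
          by_contra
          exact hxB (show x = 1 by omega ▸ h.one_mem_B)
        simpa [hxE, hxE'] using hb x hx2 (by omega)
  ext x
  by_cases hx : 1 ≤ x ∧ x < n
  · exact key x hx.1 hx.2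
  · exact iff_of_false (fun hxB => hx (h.mem_B x hxB)) (fun hxB => hx (h'.mem_B x hxB))

lemma isCoxeterCycle_of_descents {n : ℕ} {B E : Finset ℕ} {c : Equiv.Perm ℕ}
    (hB : IsElementaryBipartition n B E) (hsymm : InSymm n c) (hcox : IsCoxeterElement n c)
    (hfin : ∀ i, 1 ≤ i → i ≤ n - 1 → (IsFinalIn n i c ↔ i ∈ B ∧ i + 1 ∈ E))
    (hini : ∀ i, 2 ≤ i → i ≤ n - 2 → (IsInitialIn n i c ↔ i ∈ E ∧ i + 1 ∈ B)) :
    IsCoxeterCycle n B E c := by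
  obtain ⟨l, hl, rfl⟩ := hcox
  obtain ⟨B', E', hB', hc⟩ := exists_isCoxeterCycle_prod hB.two_le hl
  obtain rfl : B = B' := hB.eq_B_of_descents hB'
    (fun i hi hin => by rw [← hfin i hi hin, hc.isFinalIn_iff hB' hsymm hi hin])
    (fun i hi hin => by rw [← hini i hi hin, hc.isInitialIn_iff hB' hsymm hi hin])
  rwa [hB.eq_E hB']

end CoxeterElements

section Shape

namespace IsElementaryBipartition

variable {n : ℕ} {B E : Finset ℕ}

lemma disjoint (h : IsElementaryBipartition n B E) : Disjoint B E :=
  disjoint_left.2 fun _ => h.notMem_E_of_mem_B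

lemma union_eq (h : IsElementaryBipartition n B E) : B ∪ E = Icc 1 n := by
  ext x
  by_cases hx : x ∈ B
  · have := h.mem_B x hx
    simp only [mem_union, hx, true_or, mem_Icc, true_iff]
    omega
  · simp [hx, h.mem_E_iff]

lemma card_add_card (h : IsElementaryBipartition n B E) : #B + #E = n := by
  rw [← card_union_of_disjoint h.disjoint, h.union_eq, Nat.card_Icc, Nat.add_sub_cancel]

lemma rank_add_rank (h : IsElementaryBipartition n B E) {x : ℕ} (hx : x ≤ n) :
    rank B x + rank E x = x := by
  have hfilter : (Icc 1 n).filter (· ≤ x) = Icc 1 x := by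
    ext y
    simp only [mem_filter, mem_Icc]
    omega
  rw [rank, rank, ← card_union_of_disjoint (disjoint_filter_filter h.disjoint), ← filter_union,
    h.union_eq, hfilter, Nat.card_Icc, Nat.add_sub_cancel]

lemma of_isIntervalBipartition (hBE : IsIntervalBipartition B E) (helem : IsElementary B E) :
    IsElementaryBipartition (#B + #E) B E := by
  obtain ⟨hdisj, i, j, hi, hij, hU⟩ := hBE
  obtain ⟨h1B, M, hME, hM⟩ := helem
  have hmem : ∀ x, x ∈ B ∨ x ∈ E ↔ i ≤ x ∧ x ≤ j := fun x => by
    rw [← mem_union, hU, mem_Icc]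
  have hi1 : i = 1 := by have := (hmem 1).1 (Or.inl h1B); omega
  have hjM : j = M := by
    have := (hmem M).1 (Or.inr hME)
    have := hM j (mem_union.2 ((hmem j).2 ⟨hij, le_rfl⟩))
    omega
  subst hi1 hjM
  have hcard : #B + #E = j := by
    rw [← card_union_of_disjoint hdisj, hU, Nat.card_Icc, Nat.add_sub_cancel]
  rw [hcard]
  refine ⟨fun b hb => ?_, fun x => ?_, h1B⟩
  · have := (hmem b).1 (Or.inl hb)
    have : b ≠ j := fun hbj => disjoint_left.1 hdisj hb (hbj ▸ hME)
    omega
  · refine ⟨fun hx => ⟨((hmem x).1 (Or.inr hx)).1, ((hmem x).1 (Or.inr hx)).2,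
      fun hxB => disjoint_left.1 hdisj hxB hx⟩, fun ⟨h1, h2, hxB⟩ => ?_⟩
    exact ((hmem x).2 ⟨h1, h2⟩).resolve_left hxB

lemma rank_lt_card_E (h : IsElementaryBipartition n B E) {x : ℕ} (hx : x < n) : rank E x < #E := by
  have := rank_lt_rank hx h.last_mem_E (S := E)
  have : rank E n = #E := by
    rw [rank, filter_true_of_mem fun e he => (h.mem_E he).2]
  omega

lemma nth_B_lt (h : IsElementaryBipartition n B E) {i : ℕ} (hi : 1 ≤ i) (hiB : i ≤ #B) :
    nth B i < n :=
  (h.mem_B _ (nth_mem hi hiB)).2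

lemma nth_B_eq (h : IsElementaryBipartition n B E) {i : ℕ} (hi : 1 ≤ i) (hiB : i ≤ #B) :
    nth B i = i + rank E (nth B i) := by
  have := h.rank_add_rank (h.nth_B_lt hi hiB).le
  rw [rank_nth hi hiB] at this
  omega

lemma rank_E_nth_B_one (h : IsElementaryBipartition n B E) : rank E (nth B 1) = 0 := by
  have h1 : 1 ≤ #B := one_le_card.2 ⟨1, h.one_mem_B⟩
  have := h.nth_B_eq le_rfl h1
  have := (nth_le_iff_le_rank le_rfl h1 1).2 (one_le_rank h.one_mem_B)
  omega

end IsElementaryBipartition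

lemma lamBE_add_rank {B E : Finset ℕ} {i : ℕ} (hi : 1 ≤ i) (hiB : i ≤ #B) :
    lamBE B E i + rank E (nth B i) = #E := by
  rw [lamBE, if_pos ⟨hi, hiB⟩, card_filter_lt_add_rank]

lemma lamBE_eq_zero {B E : Finset ℕ} {i : ℕ} (hiB : #B < i) : lamBE B E i = 0 := by
  rw [lamBE, if_neg (by omega)]

lemma hook11_add_one {lam : ℕ → ℕ} {p : ℕ} (hp : 1 ≤ p) (hrow : ∀ i, 1 ≤ i → (1 ≤ lam i ↔ i ≤ p)) :
    hook11 lam + 1 = lam 1 + p := by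
  have hset : {x ∈ Fer lam | x.1 = 1 ∨ x.2 = 1} =
      ↑(({1} ×ˢ Icc 1 (lam 1)) ∪ (Icc 2 p ×ˢ {1}) : Finset (ℕ × ℕ)) := by
    ext ⟨a, b⟩
    have := hrow a
    simp only [Fer, Set.mem_ofPred_eq, coe_union, coe_product, coe_singleton, coe_Icc,
      Set.mem_union, Set.mem_prod, Set.mem_singleton_iff, Set.mem_Icc]
    constructor
    · rintro ⟨⟨ha, hb, hba⟩, rfl | rfl⟩
      · exact Or.inl ⟨rfl, hb, hba⟩
      · by_cases ha1 : a = 1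
        · exact Or.inl ⟨ha1, le_rfl, ha1 ▸ hba⟩
        · exact Or.inr ⟨⟨by omega, (this ha).1 hba⟩, rfl⟩
    · rintro (⟨rfl, hb, hba⟩ | ⟨⟨ha, hap⟩, rfl⟩)
      · exact ⟨⟨le_rfl, hb, hba⟩, Or.inl rfl⟩
      · exact ⟨⟨by omega, le_rfl, (this (by omega)).2 hap⟩, Or.inr rfl⟩
  rw [hook11, hset, Set.ncard_coe_finset, card_union_of_disjoint, card_product, card_product]
  · simp only [card_singleton, Nat.card_Icc, one_mul, mul_one]
    omega
  · rw [disjoint_left]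
    rintro ⟨a, b⟩ h1 h2
    simp only [mem_product, mem_singleton, mem_Icc] at h1 h2
    omega

lemma isElementaryBipartition_of_lamBE {lam : ℕ → ℕ} {n : ℕ} (hn : n = hook11 lam + 1)
    {B E : Finset ℕ} (hBE : IsIntervalBipartition B E) (helem : IsElementary B E)
    (hlam : ∀ i, 1 ≤ i → lamBE B E i = lam i) : IsElementaryBipartition n B E := by
  have h := IsElementaryBipartition.of_isIntervalBipartition hBE helem
  have hB1 : 1 ≤ #B := one_le_card.2 ⟨1, h.one_mem_B⟩
  have hrow : ∀ i, 1 ≤ i → (1 ≤ lam i ↔ i ≤ #B) := fun i hi => by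
    rw [← hlam i hi]
    by_cases hiB : i ≤ #B
    · have := lamBE_add_rank (E := E) hi hiB
      have := h.rank_lt_card_E (h.nth_B_lt hi hiB)
      omega
    · rw [lamBE_eq_zero (by omega)]
      omega
  have hlam1 := lamBE_add_rank (E := E) le_rfl hB1
  rw [h.rank_E_nth_B_one, hlam 1 le_rfl, add_zero] at hlam1
  rwa [hn, hook11_add_one hB1 hrow, hlam1, add_comm]

end Shape

section GreeneKleitman

variable {α β : Type*}

lemma mem_dropWhile_notMem {S : Set α} [DecidablePred (· ∈ S)] {l : List α} {v : α}
    (hv : v ∈ l) (hvS : v ∈ S) : v ∈ l.dropWhile fun a => decide (a ∉ S) := by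
  rw [← List.takeWhile_append_dropWhile (p := fun a => decide (a ∉ S)) (l := l),
    List.mem_append] at hv
  refine hv.resolve_left fun h => ?_
  simpa [hvS] using List.mem_takeWhile_imp h

/-- Once a path enters a forward-closed set, it stays there. -/
lemma IsPath.dropWhile_notMem {V : Set α} {A : α → α → Prop} {S : Set α} [DecidablePred (· ∈ S)]
    {l : List α} (hl : IsPath V A l) (hclosed : ∀ a ∈ V ∩ S, ∀ b ∈ V, A a b → b ∈ S)
    (hne : l.dropWhile (fun a => decide (a ∉ S)) ≠ []) :
    IsPath (V ∩ S) A (l.dropWhile fun a => decide (a ∉ S)) := by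
  have hsuffix := List.dropWhile_suffix (fun a => decide (a ∉ S)) (l := l)
  have hV : ∀ v ∈ l.dropWhile (fun a => decide (a ∉ S)), v ∈ V := fun v hv =>
    hl.2.1 v (hsuffix.subset hv)
  have hchain : (l.dropWhile fun a => decide (a ∉ S)).IsChain fun a b => a ∈ S → b ∈ S :=
    (hl.2.2.suffix hsuffix).imp_of_mem_imp fun a b ha hb hab haS =>
      hclosed a ⟨hV a ha, haS⟩ b (hV b hb) hab
  have hS := hchain.induction _ _ (fun _ _ h => h) fun hne => by
    simpa using List.head_dropWhile_not _ hne
  exact ⟨hne, fun v hv => ⟨hV v hv, hS v hv⟩, hl.2.2.suffix hsuffix⟩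

variable [DecidableEq α] [DecidableEq β]

lemma bddAbove_wt {V : Set α} (hV : V.Finite) (A : α → α → Prop) (f : α → ℕ) (ℓ : ℕ) :
    BddAbove {w | ∃ γ : Fin ℓ → List α, (∀ i, IsPath V A (γ i)) ∧ w = wt f γ} := by
  refine ⟨∑ v ∈ hV.toFinset, f v, ?_⟩
  rintro _ ⟨γ, hγ, rfl⟩
  refine sum_le_sum_of_subset fun v hv => ?_
  obtain ⟨i, -, hvi⟩ := mem_biUnion.1 hv
  exact hV.mem_toFinset.2 ((hγ i).2.1 v (List.mem_toFinset.1 hvi))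

lemma MGK_le_of_forall_exists {V₁ : Set α} {A₁ : α → α → Prop} {f₁ : α → ℕ} {V₂ : Set β}
    {A₂ : β → β → Prop} {f₂ : β → ℕ} (hV₂ : V₂.Finite) {ℓ : ℕ}
    (h : ∀ γ : Fin ℓ → List α, (∀ i, IsPath V₁ A₁ (γ i)) →
      ∃ γ' : Fin ℓ → List β, (∀ i, IsPath V₂ A₂ (γ' i)) ∧ wt f₁ γ ≤ wt f₂ γ') :
    MGK V₁ A₁ f₁ ℓ ≤ MGK V₂ A₂ f₂ ℓ := by
  refine csSup_le' fun _ ⟨γ, hγ, hw⟩ => ?_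
  obtain ⟨γ', hγ', hle⟩ := h γ hγ
  exact hw ▸ hle.trans (le_csSup (bddAbove_wt hV₂ A₂ f₂ ℓ) ⟨γ', hγ', rfl⟩)

lemma MGK_le_of_injOn {V₁ : Set α} {A₁ : α → α → Prop} {f₁ : α → ℕ} {V₂ : Set β}
    {A₂ : β → β → Prop} {f₂ : β → ℕ} (hV₂ : V₂.Finite) (φ : α → β) (hmaps : Set.MapsTo φ V₁ V₂)
    (hinj : Set.InjOn φ V₁) (harrow : ∀ a ∈ V₁, ∀ b ∈ V₁, A₁ a b → A₂ (φ a) (φ b))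
    (hf : ∀ a ∈ V₁, f₂ (φ a) = f₁ a) (ℓ : ℕ) : MGK V₁ A₁ f₁ ℓ ≤ MGK V₂ A₂ f₂ ℓ := by
  refine MGK_le_of_forall_exists hV₂ fun γ hγ => ⟨fun i => (γ i).map φ, fun i => ⟨?_, ?_, ?_⟩, ?_⟩
  · simpa using (hγ i).1
  · simpa using fun a ha => hmaps ((hγ i).2.1 a ha)
  · exact List.isChain_map_of_isChain φ (fun _ _ h => h) <| (hγ i).2.2.imp_of_mem_imp
      fun a b ha hb hab => harrow a ((hγ i).2.1 a ha) b ((hγ i).2.1 b hb) hab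
  · have hU : ∀ v ∈ univ.biUnion fun i => (γ i).toFinset, v ∈ V₁ := fun v hv => by
      obtain ⟨i, -, hvi⟩ := mem_biUnion.1 hv
      exact (hγ i).2.1 v (List.mem_toFinset.1 hvi)
    have himage : (univ.biUnion fun i => ((γ i).map φ).toFinset) =
        (univ.biUnion fun i => (γ i).toFinset).image φ := by
      ext
      simp only [mem_biUnion, mem_univ, true_and, List.mem_toFinset, List.mem_map, mem_image]
      exact ⟨fun ⟨i, a, ha, hab⟩ => ⟨a, ⟨i, ha⟩, hab⟩, fun ⟨a, ⟨i, ha⟩, hab⟩ => ⟨i, a, ha, hab⟩⟩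
    rw [wt, wt, himage, sum_image fun a ha b hb => hinj (hU a ha) (hU b hb)]
    exact (sum_congr rfl fun v hv => hf v (hU v hv)).ge

lemma MGK_le_MGK_inter {V : Set α} {A : α → α → Prop} {f : α → ℕ} (S : Set α) (hV : V.Finite)
    (hne : (V ∩ S).Nonempty) (hclosed : ∀ a ∈ V ∩ S, ∀ b ∈ V, A a b → b ∈ S)
    (hf : ∀ a ∈ V, a ∉ S → f a = 0) (ℓ : ℕ) : MGK V A f ℓ ≤ MGK (V ∩ S) A f ℓ := by
  classical
  obtain ⟨v₀, hv₀⟩ := hne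
  refine MGK_le_of_forall_exists (hV.subset Set.inter_subset_left) fun γ hγ => ?_
  let δ : Fin ℓ → List α := fun i => if (γ i).dropWhile (fun a => decide (a ∉ S)) = [] then [v₀]
    else (γ i).dropWhile fun a => decide (a ∉ S)
  refine ⟨δ, fun i => ?_, ?_⟩
  · dsimp only [δ]
    split_ifs with h
    · exact ⟨by simp, by simpa using hv₀, List.isChain_singleton _⟩
    · exact (hγ i).dropWhile_notMem hclosed h
  · have hU : ∀ v ∈ univ.biUnion fun i => (γ i).toFinset, ∃ i, v ∈ γ i := fun v hv => by
      obtain ⟨i, -, hvi⟩ := mem_biUnion.1 hv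
      exact ⟨i, List.mem_toFinset.1 hvi⟩
    calc wt f γ = ∑ v ∈ (univ.biUnion fun i => (γ i).toFinset).filter (· ∈ S), f v := by
          refine (sum_filter_of_ne fun v hv hfv => ?_).symm
          obtain ⟨i, hvi⟩ := hU v hv
          by_contra hvS
          exact hfv (hf v ((hγ i).2.1 v hvi) hvS)
      _ ≤ wt f δ := by
          refine sum_le_sum_of_subset fun v hv => ?_
          obtain ⟨hv, hvS⟩ := mem_filter.1 hv
          obtain ⟨i, hvi⟩ := hU v hv
          have hvδ := mem_dropWhile_notMem hvi hvS
          refine mem_biUnion.2 ⟨i, mem_univ i, List.mem_toFinset.2 ?_⟩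
          simpa only [δ, if_neg (List.ne_nil_of_mem hvδ)] using hvδ

end GreeneKleitman

section Labelling

variable {n : ℕ} {B E : Finset ℕ} {lam : ℕ → ℕ}

/-- The inverse of `boxToTransp` on `B ×ˢ E`. -/
def transpToBox (B E : Finset ℕ) (x : ℕ × ℕ) : ℕ × ℕ := (rank B x.1, #E + 1 - rank E x.2)

lemma mem_Fer_iff (hlam : ∀ i, 1 ≤ i → lamBE B E i = lam i) {p : ℕ × ℕ} :
    p ∈ Fer lam ↔ 1 ≤ p.1 ∧ p.1 ≤ #B ∧ 1 ≤ p.2 ∧ p.2 + rank E (nth B p.1) ≤ #E := by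
  refine ⟨fun ⟨h1, h2, h3⟩ => ?_, fun ⟨h1, hB1, h2, h3⟩ => ⟨h1, h2, ?_⟩⟩
  · rw [← hlam _ h1] at h3
    by_cases hiB : p.1 ≤ #B
    · have := lamBE_add_rank (E := E) h1 hiB
      omega
    · rw [lamBE_eq_zero (by omega)] at h3
      omega
  · rw [← hlam _ h1]
    have := lamBE_add_rank (E := E) h1 hB1
    omega

lemma lam_one (hB : IsElementaryBipartition n B E) (hlam : ∀ i, 1 ≤ i → lamBE B E i = lam i) :
    lam 1 = #E := by
  have := lamBE_add_rank (E := E) le_rfl (one_le_card.2 ⟨1, hB.one_mem_B⟩)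
  rw [hB.rank_E_nth_B_one, hlam 1 le_rfl] at this
  omega

lemma boxToTransp_mem (hlam : ∀ i, 1 ≤ i → lamBE B E i = lam i) {p : ℕ × ℕ}
    (hp : p ∈ Fer lam) :
    boxToTransp B E p ∈ B ×ˢ E ∧ (boxToTransp B E p).1 < (boxToTransp B E p).2 := by
  obtain ⟨h1, hB1, h2, h3⟩ := (mem_Fer_iff hlam).1 hp
  refine ⟨mem_product.2 ⟨nth_mem h1 hB1, nth_mem (by omega) (by omega)⟩, ?_⟩
  exact (lt_nth_iff_rank_lt (by omega) (by omega) (nth B p.1)).2 (by omega)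

lemma transpToBox_boxToTransp (hlam : ∀ i, 1 ≤ i → lamBE B E i = lam i) {p : ℕ × ℕ}
    (hp : p ∈ Fer lam) :
    transpToBox B E (boxToTransp B E p) = p := by
  obtain ⟨h1, hB1, h2, h3⟩ := (mem_Fer_iff hlam).1 hp
  simp only [transpToBox, boxToTransp]
  rw [rank_nth h1 hB1, rank_nth (by omega) (by omega)]
  exact Prod.ext rfl (by simp only; omega)

lemma boxToTransp_transpToBox {x : ℕ × ℕ} (hx : x ∈ B ×ˢ E) :
    boxToTransp B E (transpToBox B E x) = x := by
  obtain ⟨hb, he⟩ := mem_product.1 hx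
  have := one_le_rank he
  have := rank_le_card (S := E) x.2
  simp only [transpToBox, boxToTransp]
  rw [show #E - (#E + 1 - rank E x.2) + 1 = rank E x.2 by omega, nth_rank hb, nth_rank he]

lemma transpToBox_mem_Fer (hlam : ∀ i, 1 ≤ i → lamBE B E i = lam i) {x : ℕ × ℕ}
    (hx : x ∈ B ×ˢ E) (hlt : x.1 < x.2) :
    transpToBox B E x ∈ Fer lam := by
  obtain ⟨hb, he⟩ := mem_product.1 hx
  have := rank_lt_rank hlt he
  have := rank_le_card (S := E) x.2
  rw [mem_Fer_iff hlam]
  simp only [transpToBox, nth_rank hb]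
  exact ⟨one_le_rank hb, rank_le_card _, by omega, by omega⟩

lemma isGreatest_diag (hB : IsElementaryBipartition n B E)
    (hlam : ∀ i, 1 ≤ i → lamBE B E i = lam i) {m : ℕ} (hm : 1 ≤ m) (hmn : m < n) :
    IsGreatest (diag lam m) (rank B m, #E - rank E m) := by
  have hsum := hB.rank_add_rank hmn.le
  have hEm := hB.rank_lt_card_E hmn
  have hu : 1 ≤ rank B m := (one_le_rank hB.one_mem_B).trans (rank_mono hm)
  have huB := rank_le_card (S := B) m
  refine ⟨⟨(mem_Fer_iff hlam).2 ⟨hu, huB, by omega, ?_⟩, ?_⟩, fun ⟨i, j⟩ ⟨hp, hdiag⟩ => ?_⟩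
  · have := rank_mono (S := E) ((nth_le_iff_le_rank hu huB m).2 le_rfl)
    simp only
    omega
  · simp only [lam_one hB hlam]
    omega
  · obtain ⟨h1, hiB, h2, h3⟩ := (mem_Fer_iff hlam).1 hp
    dsimp only at h1 hiB h2 h3
    have hb := hB.nth_B_eq h1 hiB
    simp only [lam_one hB hlam] at hdiag
    have := (nth_le_iff_le_rank h1 hiB m).1 (by omega)
    exact ⟨this, by simp only; omega⟩

lemma exists_mem_diag (hB : IsElementaryBipartition n B E)
    (hlam : ∀ i, 1 ≤ i → lamBE B E i = lam i) {p : ℕ × ℕ} (hp : p ∈ Fer lam) :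
    ∃ m : ℕ, 1 ≤ m ∧ m < n ∧ p ∈ diag lam m := by
  obtain ⟨h1, hiB, h2, h3⟩ := (mem_Fer_iff hlam).1 hp
  have := hB.nth_B_eq h1 hiB
  have := (hB.mem_B _ (nth_mem h1 hiB)).1
  have := hB.card_add_card
  refine ⟨p.1 + #E - p.2, by omega, by omega, hp, ?_⟩
  rw [lam_one hB hlam]
  omega

lemma boxToTransp_mem_ARmSet (hB : IsElementaryBipartition n B E)
    (hlam : ∀ i, 1 ≤ i → lamBE B E i = lam i) {m : ℕ} {p : ℕ × ℕ}
    (hp : p ∈ ideal lam (rank B m, #E - rank E m)) : boxToTransp B E p ∈ ARmSet n m := by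
  obtain ⟨hpF, hi, hj⟩ := hp
  obtain ⟨h1, hiB, h2, h3⟩ := (mem_Fer_iff hlam).1 hpF
  obtain ⟨hmem, hlt⟩ := boxToTransp_mem hlam hpF
  obtain ⟨hb, he⟩ := mem_product.1 hmem
  refine ⟨⟨(hB.mem_B _ hb).1, hlt, (hB.mem_E he).2⟩, ?_, ?_⟩
  · exact (nth_le_iff_le_rank h1 hiB m).2 hi
  · exact (lt_nth_iff_rank_lt (by omega) (by omega) m).2 (by simp only at hj; omega)

lemma transpToBox_mem_ideal (hlam : ∀ i, 1 ≤ i → lamBE B E i = lam i) {m : ℕ} {x : ℕ × ℕ}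
    (hx : x ∈ ARmSet n m)
    (hxBE : x ∈ B ×ˢ E) : transpToBox B E x ∈ ideal lam (rank B m, #E - rank E m) := by
  obtain ⟨⟨-, hlt, -⟩, hbm, hme⟩ := hx
  have := rank_lt_rank hme (mem_product.1 hxBE).2
  have := rank_le_card (S := E) x.2
  refine ⟨transpToBox_mem_Fer hlam hxBE hlt, rank_mono hbm, ?_⟩
  simp only [transpToBox]
  omega

end Labelling

namespace IsCoxeterCycle

variable {n : ℕ} {B E : Finset ℕ} {c : Equiv.Perm ℕ}

lemma rank_apply_of_mem_B (hc : IsCoxeterCycle n B E c) {b : ℕ} (hb : b ∈ B) (hcb : c b ∈ B) :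
    rank B (c b) = rank B b + 1 :=
  rank_eq_rank_add_one hcb (hc.1 b hb).2.1 (hc.1 b hb).2.2

lemma rank_apply_of_mem_E (hc : IsCoxeterCycle n B E c) {e : ℕ} (he : e ∈ E) :
    rank E e = rank E (c e) + 1 :=
  rank_eq_rank_add_one he (hc.2 e he).2.1 fun z hz hlt => by
    by_contra! hze
    have := (hc.2 e he).2.2 z hz hze
    omega

lemma apply_nth_B (hB : IsElementaryBipartition n B E) (hc : IsCoxeterCycle n B E c) {i : ℕ}
    (hi : 1 ≤ i) (hiB : i + 1 ≤ #B) : c (nth B i) = nth B (i + 1) := by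
  have hb := nth_mem hi (by omega : i ≤ #B)
  have hb' := nth_mem (by omega) hiB
  have hlt : nth B i < nth B (i + 1) := by
    rw [lt_nth_iff_rank_lt (by omega) hiB, rank_nth hi (by omega)]
    omega
  obtain ⟨h1, -, h3⟩ := hc.1 _ hb
  have := h3 _ hb' hlt
  have := (hB.mem_B _ hb').2
  have hcb : c (nth B i) ∈ B := (mem_insert.1 h1).resolve_left (by omega)
  rw [← nth_rank hcb, hc.rank_apply_of_mem_B hb hcb, rank_nth hi (by omega)]

lemma apply_nth_E (hB : IsElementaryBipartition n B E) (hc : IsCoxeterCycle n B E c) {t : ℕ}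
    (ht : 2 ≤ t) (htE : t ≤ #E) : c (nth E t) = nth E (t - 1) := by
  have he := nth_mem (by omega) htE
  have he' := nth_mem (S := E) (i := t - 1) (by omega) (by omega)
  have hlt : nth E (t - 1) < nth E t := by
    rw [lt_nth_iff_rank_lt (by omega) htE, rank_nth (by omega) (by omega)]
    omega
  obtain ⟨h1, -, h3⟩ := hc.2 _ he
  have := h3 _ he' hlt
  have hce : c (nth E t) ∈ E := by
    refine (mem_insert.1 h1).resolve_left fun h1' => ?_
    have := (hB.mem_E he').1
    exact hB.notMem_E_of_mem_B hB.one_mem_B (show nth E (t - 1) = 1 by omega ▸ he')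
  have := hc.rank_apply_of_mem_E he
  rw [rank_nth (by omega) htE] at this
  rw [← nth_rank hce]
  congr 1
  omega

variable {lam : ℕ → ℕ}

lemma arArrow_boxToTransp (hB : IsElementaryBipartition n B E) (hc : IsCoxeterCycle n B E c)
    (hlam : ∀ i, 1 ≤ i → lamBE B E i = lam i) {p p' : ℕ × ℕ} (h : GArrow lam p p') :
    ARArrow n c (boxToTransp B E p) (boxToTransp B E p') := by
  obtain ⟨hp, hp', hstep⟩ := h
  have hvertex : ∀ x ∈ Fer lam, ARVertex n (boxToTransp B E x) := fun x hx => by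
    obtain ⟨hmem, hlt⟩ := boxToTransp_mem hlam hx
    exact ⟨(hB.mem_B _ (mem_product.1 hmem).1).1, hlt, (hB.mem_E (mem_product.1 hmem).2).2⟩
  obtain ⟨h1, hiB, h2, h3⟩ := (mem_Fer_iff hlam).1 hp
  obtain ⟨h1', hiB', h2', h3'⟩ := (mem_Fer_iff hlam).1 hp'
  have hlt' := (boxToTransp_mem hlam hp').2
  refine ⟨hvertex p hp, hvertex p' hp', ?_⟩
  rcases hstep with rfl | rfl
  · simp only [boxToTransp] at hlt' ⊢
    rw [hc.apply_nth_B hB h1 hiB']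
    exact Or.inr ⟨hlt', rfl⟩
  · simp only [boxToTransp] at hlt' ⊢
    rw [hc.apply_nth_E hB (by omega) (by omega),
      show #E - p.2 + 1 - 1 = #E - (p.2 + 1) + 1 by omega]
    exact Or.inl ⟨hlt', rfl⟩

lemma gArrow_transpToBox (hc : IsCoxeterCycle n B E c) (hlam : ∀ i, 1 ≤ i → lamBE B E i = lam i)
    {x y : ℕ × ℕ} (hx : x ∈ B ×ˢ E)
    (h : ARArrow n c x y) : y ∈ B ×ˢ E ∧ GArrow lam (transpToBox B E x) (transpToBox B E y) := by
  obtain ⟨⟨hx1, hx12, hx2⟩, ⟨hy1, hy12, hy2⟩, hstep⟩ := h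
  obtain ⟨hb, he⟩ := mem_product.1 hx
  rcases hstep with ⟨-, rfl⟩ | ⟨-, rfl⟩
  · have hce : c x.2 ∈ E := (mem_insert.1 (hc.2 _ he).1).resolve_left (by simp only at hy12; omega)
    have hyBE : (x.1, c x.2) ∈ B ×ˢ E := mem_product.2 ⟨hb, hce⟩
    have := hc.rank_apply_of_mem_E he
    have := rank_le_card (S := E) x.2
    refine ⟨hyBE, transpToBox_mem_Fer hlam hx hx12, transpToBox_mem_Fer hlam hyBE hy12,
      Or.inr ?_⟩
    simp only [transpToBox, Prod.mk.injEq, true_and]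
    omega
  · have hcb : c x.1 ∈ B := (mem_insert.1 (hc.1 _ hb).1).resolve_left (by simp only at hy12; omega)
    have hyBE : (c x.1, x.2) ∈ B ×ˢ E := mem_product.2 ⟨hcb, he⟩
    refine ⟨hyBE, transpToBox_mem_Fer hlam hx hx12, transpToBox_mem_Fer hlam hyBE hy12,
      Or.inl ?_⟩
    simp only [transpToBox, hc.rank_apply_of_mem_B hb hcb]

end IsCoxeterCycle

section Transfer

variable {n : ℕ} {B E : Finset ℕ} {lam : ℕ → ℕ}

lemma exists_isBarOf (hlam : ∀ i, 1 ≤ i → lamBE B E i = lam i) (f : Filling lam) :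
    ∃ fbar, IsBarOf lam B E f fbar := by
  have hinj : Function.Injective fun p : Fer lam => boxToTransp B E p := fun p p' h =>
    Subtype.ext <| by
      rw [← transpToBox_boxToTransp hlam p.2, ← transpToBox_boxToTransp hlam p'.2]
      exact congrArg _ h
  exact ⟨Function.extend _ f 0, hinj.extend_apply f 0,
    fun x hx => Function.extend_apply' _ _ _ fun ⟨p, hp⟩ => hx p hp.symm⟩

lemma extendF_apply {f : Filling lam} {p : ℕ × ℕ} (hp : p ∈ Fer lam) :
    extendF lam f p = f ⟨p, hp⟩ :=
  Subtype.val_injective.extend_apply f _ ⟨p, hp⟩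

lemma MGK_ARmSet_eq_MGK_ideal {c : Equiv.Perm ℕ} (hB : IsElementaryBipartition n B E)
    (hc : IsCoxeterCycle n B E c) (hlam : ∀ i, 1 ≤ i → lamBE B E i = lam i) {m : ℕ} (hm : 1 ≤ m)
    (hmn : m < n) {f : Filling lam} {fbar : ℕ × ℕ → ℕ} (hbar : IsBarOf lam B E f fbar) (ℓ : ℕ) :
    MGK (ARmSet n m) (ARArrow n c) fbar ℓ =
      MGK (ideal lam (rank B m, #E - rank E m)) (GArrow lam) (extendF lam f) ℓ := by
  have hARfin : (ARmSet n m).Finite :=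
    (Set.finite_Iic (n, n)).subset fun x ⟨⟨_, _, h⟩, _, _⟩ => ⟨by omega, h⟩
  have hidealfin : (ideal lam (rank B m, #E - rank E m)).Finite :=
    (Set.finite_Iic _).subset fun _ hx => hx.2
  refine le_antisymm ((MGK_le_MGK_inter (B ×ˢ E : Finset (ℕ × ℕ)) hARfin ?_ ?_ ?_ ℓ).trans
    (MGK_le_of_injOn hidealfin (transpToBox B E) ?_ ?_ ?_ ?_ ℓ))
    (MGK_le_of_injOn hARfin (boxToTransp B E) ?_ ?_ ?_ ?_ ℓ)
  · have := hB.two_le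
    exact ⟨(1, n), ⟨⟨le_rfl, by omega, le_rfl⟩, hm, hmn⟩,
      mem_product.2 ⟨hB.one_mem_B, hB.last_mem_E⟩⟩
  · exact fun x hx y _ hxy => (hc.gArrow_transpToBox hlam hx.2 hxy).1
  · exact fun x _ hx => hbar.2 x fun p hpx => hx (hpx ▸ (boxToTransp_mem hlam p.2).1)
  · exact fun x hx => transpToBox_mem_ideal hlam hx.1 hx.2
  · exact fun x hx y hy hxy => by
      rw [← boxToTransp_transpToBox hx.2, ← boxToTransp_transpToBox hy.2, hxy]
  · exact fun x hx y _ hxy => ⟨(hc.gArrow_transpToBox hlam hx.2 hxy).2.1,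
      (hc.gArrow_transpToBox hlam hx.2 hxy).2.2.1, (hc.gArrow_transpToBox hlam hx.2 hxy).2.2.2⟩
  · intro x hx
    have hF := transpToBox_mem_Fer hlam hx.2 hx.1.1.2.1
    rw [extendF_apply hF, ← hbar.1 ⟨_, hF⟩, boxToTransp_transpToBox hx.2]
  · exact fun p hp => boxToTransp_mem_ARmSet hB hlam hp
  · exact fun p hp p' hp' h => by
      rw [← transpToBox_boxToTransp hlam hp.1, ← transpToBox_boxToTransp hlam hp'.1, h]
  · exact fun p _ p' _ h => hc.arArrow_boxToTransp hB hlam h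
  · exact fun p hp => by rw [extendF_apply hp.1]; exact hbar.1 ⟨p, hp.1⟩

end Transfer

theorem coxRSK_eq_gansnerRSK_general (lam : ℕ → ℕ) (n : ℕ) (hn : n = hook11 lam + 1)
    (B E : Finset ℕ) (hBE : IsIntervalBipartition B E) (helem : IsElementary B E)
    (hlam : ∀ i, 1 ≤ i → lamBE B E i = lam i) :
    (∃ c : Equiv.Perm ℕ, InSymm n c ∧ IsCoxeterElement n c ∧
      (∀ i, 1 ≤ i → i ≤ n - 1 → (IsFinalIn n i c ↔ i ∈ B ∧ i + 1 ∈ E)) ∧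
      (∀ i, 2 ≤ i → i ≤ n - 2 → (IsInitialIn n i c ↔ i ∈ E ∧ i + 1 ∈ B))) ∧
    ∀ c : Equiv.Perm ℕ, InSymm n c → IsCoxeterElement n c →
      (∀ i, 1 ≤ i → i ≤ n - 1 → (IsFinalIn n i c ↔ i ∈ B ∧ i + 1 ∈ E)) →
      (∀ i, 2 ≤ i → i ≤ n - 2 → (IsInitialIn n i c ↔ i ∈ E ∧ i + 1 ∈ B)) →
      ∀ Φ Ψ : Filling lam → Filling lam,
        IsCoxRSK lam B E n c Φ → IsGansnerRSK lam Ψ → Φ = Ψ := by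
  have hB := isElementaryBipartition_of_lamBE hn hBE helem hlam
  refine ⟨?_, fun c hsymm hcox hfin hini Φ Ψ hΦ hΨ => ?_⟩
  · obtain ⟨l, hl, hc⟩ := hB.exists_isCoxeterCycle_prod
    have hsymm := inSymm_prod_adjT (forall_mem_of_perm_Ico hl)
    exact ⟨_, hsymm, ⟨l, hl, rfl⟩, fun i hi hin => hc.isFinalIn_iff hB hsymm hi hin,
      fun i hi hin => hc.isInitialIn_iff hB hsymm hi hin⟩
  · have hc := isCoxeterCycle_of_descents hB hsymm hcox hfin hini
    funext f ⟨p, hp⟩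
    obtain ⟨fbar, hbar⟩ := exists_isBarOf hlam f
    obtain ⟨m, hm, hmn, hpm⟩ := exists_mem_diag hB hlam hp
    have huv := isGreatest_diag hB hlam hm hmn
    have hMGK := MGK_ARmSet_eq_MGK_ideal hB hc hlam hm hmn hbar
    rw [hΦ f fbar hbar m hm (by omega) _ huv p hpm, hΨ f m _ huv p hpm, GK, GK, hMGK, hMGK]

/-- Let `λ` be a nonzero integer partition, `n = h_λ(1,1) + 1`, and
`(B, E)` the unique elementary interval bipartition with `λ(B,E) = λ`. There exists a
Coxeter element `c` of `S_n` such that (a) for `1 ≤ i ≤ n-1`, `s_i` is final in `c` iff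
`i ∈ B` and `i+1 ∈ E`, and (b) for `2 ≤ i ≤ n-2`, `s_i` is initial in `c` iff `i ∈ E`
and `i+1 ∈ B`; and for any such `c`, `RSK_{λ,c} = RSK_λ`. -/
theorem coxRSK_eq_gansnerRSK (lam : ℕ → ℕ) (hpart : IsPartition lam)
    (hne : lam 1 ≠ 0) (n : ℕ) (hn : n = hook11 lam + 1)
    (B E : Finset ℕ) (hBE : IsIntervalBipartition B E) (helem : IsElementary B E)
    (hlam : ∀ i, 1 ≤ i → lamBE B E i = lam i) :
    (∃ c : Equiv.Perm ℕ, InSymm n c ∧ IsCoxeterElement n c ∧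
      (∀ i, 1 ≤ i → i ≤ n - 1 → (IsFinalIn n i c ↔ i ∈ B ∧ i + 1 ∈ E)) ∧
      (∀ i, 2 ≤ i → i ≤ n - 2 → (IsInitialIn n i c ↔ i ∈ E ∧ i + 1 ∈ B))) ∧
    ∀ c : Equiv.Perm ℕ, InSymm n c → IsCoxeterElement n c →
      (∀ i, 1 ≤ i → i ≤ n - 1 → (IsFinalIn n i c ↔ i ∈ B ∧ i + 1 ∈ E)) →
      (∀ i, 2 ≤ i → i ≤ n - 2 → (IsInitialIn n i c ↔ i ∈ E ∧ i + 1 ∈ B)) →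
      ∀ Φ Ψ : Filling lam → Filling lam,
        IsCoxRSK lam B E n c Φ → IsGansnerRSK lam Ψ → Φ = Ψ :=
  coxRSK_eq_gansnerRSK_general lam n hn B E hBE helem hlam

end RSKPaper
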